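/- arXiv:2307.01796 — 2 statements merged into one kernel-verified Lean document; each statement's English description precedes it below -/
import Mathlib

section
/- Let V ∈ C⁰(ℝ), let a, φ ∈ C²(I) with a > 0 satisfy the flat (k = 0) Robertson–Walker Einstein–scalar-field equations (F1) and (F2) on an interval I, and suppose there is a C¹ function ψ > 0, defined on an interval containing a(I), such that ȧ(t) = −ψ(a(t)) for all t ∈ I. Then for all t ∈ I: φ̇(t)² = (2ψ(a(t))²/a(t)²)·(1 − a(t)ψ′(a(t))/ψ(a(t))) and V(φ(t)) = (2ψ(a(t))²/a(t)²)·(1 + a(t)ψ′(a(t))/(2ψ(a(t)))). -/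
/-! Differentiating `ȧ = -ψ(a)` once more gives `ä = ψ(a) ψ'(a)`. The sum and the difference of
(F1) and (F2) express `φ̇²` and `V(φ)` through `a`, `ȧ`, `ä`, and substituting both identities
gives the claimed formulas. -/

open Filter Topology

theorem deriv_deriv_of_deriv_eventuallyEq_comp {f g : ℝ → ℝ} {t : ℝ}
    (hf : DifferentiableAt ℝ f t) (hg : DifferentiableAt ℝ g (f t))
    (h : deriv f =ᶠ[𝓝 t] g ∘ f) :
    deriv (deriv f) t = deriv g (f t) * deriv f t := by
  rw [h.deriv_eq, deriv_comp t hg hf]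

theorem kinetic_potential_of_friedmann {k a a' a'' K W : ℝ}
    (hF1 : 3 * (k + a' ^ 2) / a ^ 2 = 1 / 2 * K + W)
    (hF2 : -((k + a' ^ 2) + 2 * a * a'') / a ^ 2 = 1 / 2 * K - W) :
    K = 2 * ((k + a' ^ 2) - a * a'') / a ^ 2 ∧ W = (2 * (k + a' ^ 2) + a * a'') / a ^ 2 := by
  constructor
  · linear_combination -hF1 - hF2
  · linear_combination (-1 / 2 : ℝ) * hF1 + (1 / 2 : ℝ) * hF2

theorem profile_reconstruction_general (V : ℝ → ℝ)
    (I : Set ℝ) (hI : IsOpen I)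
    (a φ : ℝ → ℝ) (ha : ContDiff ℝ 2 a)
    (hapos : ∀ t ∈ I, 0 < a t)
    (hF1 : ∀ t ∈ I,
      3 * ((0 : ℝ) + (deriv a t) ^ 2) / (a t) ^ 2
        = 1 / 2 * (deriv φ t) ^ 2 + V (φ t))
    (hF2 : ∀ t ∈ I,
      -(((0 : ℝ) + (deriv a t) ^ 2) + 2 * a t * deriv (deriv a) t) / (a t) ^ 2
        = 1 / 2 * (deriv φ t) ^ 2 - V (φ t))
    (ψ : ℝ → ℝ) (hψ : ContDiff ℝ 1 ψ) (hψpos : ∀ t ∈ I, 0 < ψ (a t))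
    (hprof : ∀ t ∈ I, deriv a t = -ψ (a t)) :
    ∀ t ∈ I,
      (deriv φ t) ^ 2
        = 2 * (ψ (a t)) ^ 2 / (a t) ^ 2 * (1 - a t * deriv ψ (a t) / ψ (a t)) ∧
      V (φ t)
        = 2 * (ψ (a t)) ^ 2 / (a t) ^ 2 * (1 + a t * deriv ψ (a t) / (2 * ψ (a t))) := by
  intro t ht
  have hane : a t ≠ 0 := (hapos t ht).ne'
  have hψne : ψ (a t) ≠ 0 := (hψpos t ht).ne'
  have hprof_near : deriv a =ᶠ[𝓝 t] (-ψ) ∘ a :=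
    eventually_of_mem (hI.mem_nhds ht) hprof
  have hacc : deriv (deriv a) t = ψ (a t) * deriv ψ (a t) := by
    rw [deriv_deriv_of_deriv_eventuallyEq_comp (ha.differentiable (by norm_num) t)
      ((hψ.differentiable one_ne_zero _).neg) hprof_near, deriv.neg', hprof t ht]
    ring
  obtain ⟨hkin, hpot⟩ := kinetic_potential_of_friedmann (hF1 t ht) (hF2 t ht)
  rw [hprof t ht, hacc] at hkin hpot
  constructor
  · rw [hkin]; field_simp; ring
  · rw [hpot]; field_simp; ring

/-- **Reconstruction of kinetic energy and potential from the collapse profile**: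
if `a, φ` solve the flat (`k = 0`) Robertson–Walker Einstein–scalar-field
equations (F1)–(F2) on an (open) interval `I` and `ȧ = −ψ(a)` for a `C¹`
positive profile `ψ`, then
`φ̇² = (2ψ(a)²/a²)(1 − aψ′(a)/ψ(a))` and
`V(φ) = (2ψ(a)²/a²)(1 + aψ′(a)/(2ψ(a)))` on `I`. -/
theorem profile_reconstruction (V : ℝ → ℝ) (hV : Continuous V)
    (I : Set ℝ) (hI : IsOpen I) (hconn : I.OrdConnected)
    (a φ : ℝ → ℝ) (ha : ContDiff ℝ 2 a) (hφ : ContDiff ℝ 2 φ)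
    (hapos : ∀ t ∈ I, 0 < a t)
    (hF1 : ∀ t ∈ I,
      3 * ((0 : ℝ) + (deriv a t) ^ 2) / (a t) ^ 2
        = 1 / 2 * (deriv φ t) ^ 2 + V (φ t))
    (hF2 : ∀ t ∈ I,
      -(((0 : ℝ) + (deriv a t) ^ 2) + 2 * a t * deriv (deriv a) t) / (a t) ^ 2
        = 1 / 2 * (deriv φ t) ^ 2 - V (φ t))
    (ψ : ℝ → ℝ) (hψ : ContDiff ℝ 1 ψ) (hψpos : ∀ t ∈ I, 0 < ψ (a t))
    (hprof : ∀ t ∈ I, deriv a t = -ψ (a t)) :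
    ∀ t ∈ I,
      (deriv φ t) ^ 2
        = 2 * (ψ (a t)) ^ 2 / (a t) ^ 2 * (1 - a t * deriv ψ (a t) / ψ (a t)) ∧
      V (φ t)
        = 2 * (ψ (a t)) ^ 2 / (a t) ^ 2 * (1 + a t * deriv ψ (a t) / (2 * ψ (a t))) :=
  profile_reconstruction_general V I hI a φ ha hapos hF1 hF2 ψ hψ hψpos hprof
end

section
/- Fix ν > 0 and ψ₀ > 0, and let ψ(a) := ψ₀ a^{1−ν/2} for a > 0. Define φ(a) := −√ν · log a and let V(a) := (2ψ(a)²/a²)·(1 + aψ′(a)/(2ψ(a))) be the potential reconstructed from the collapse profile. Then for all a > 0: (i) φ satisfies (dφ/da)² = (2/a²)·(1 − aψ′(a)/ψ(a)) (which here equals ν/a²); and (ii) V(a) = ψ₀²·(3 − ν/2)·e^{√ν·φ(a)}. That is, expressed as a function of the scalar field, the reconstructed potential is the exponential potential V(φ) = V₀(3 − ν/2)e^{√ν φ} with V₀ = ψ₀². -/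
/-- The power-law collapse profile `ψ(a) = ψ₀ a^{1−ν/2}`. -/
noncomputable def psiP (ψ₀ ν : ℝ) : ℝ → ℝ := fun a => ψ₀ * a ^ (1 - ν / 2)

/-- The scalar field reconstructed from the power-law profile,
`φ(a) = −√ν log a`. -/
noncomputable def phiP (ν : ℝ) : ℝ → ℝ := fun a => -Real.sqrt ν * Real.log a

/-- The potential reconstructed from the collapse profile `ψ`,
`V(a) = (2ψ(a)²/a²)(1 + aψ′(a)/(2ψ(a)))`. -/
noncomputable def VP (ψ₀ ν : ℝ) : ℝ → ℝ := fun a =>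
  2 * (psiP ψ₀ ν a) ^ 2 / a ^ 2 *
    (1 + a * deriv (psiP ψ₀ ν) a / (2 * psiP ψ₀ ν a))

/-- **The power-law profile comes from an exponential potential**: for the
profile `ψ(a) = ψ₀ a^{1−ν/2}` (`ν, ψ₀ > 0`) and `φ(a) = −√ν log a`, one has
(i) `(dφ/da)² = (2/a²)(1 − aψ′(a)/ψ(a))`, which equals `ν/a²`, and
(ii) `V(a) = ψ₀²(3 − ν/2) e^{√ν φ(a)}` for every `a > 0`; i.e. as a function
of the scalar field the reconstructed potential is
`V(φ) = V₀(3 − ν/2)e^{√ν φ}` with `V₀ = ψ₀²`. -/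
theorem power_law_exponential_potential (ν ψ₀ : ℝ) (hν : 0 < ν)
    (hψ₀ : 0 < ψ₀) :
    ∀ a : ℝ, 0 < a →
      ((deriv (phiP ν) a) ^ 2
          = 2 / a ^ 2 * (1 - a * deriv (psiP ψ₀ ν) a / psiP ψ₀ ν a) ∧
        2 / a ^ 2 * (1 - a * deriv (psiP ψ₀ ν) a / psiP ψ₀ ν a) = ν / a ^ 2) ∧
      VP ψ₀ ν a = ψ₀ ^ 2 * (3 - ν / 2) * Real.exp (Real.sqrt ν * phiP ν a) := by

  intro a ha
  have hane : a ≠ 0 := ha.ne'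
  have hdpsi : deriv (psiP ψ₀ ν) a = ψ₀ * ((1 - ν / 2) * a ^ (1 - ν / 2 - 1)) :=
    ((Real.hasDerivAt_rpow_const (p := 1 - ν / 2) (Or.inl hane)).const_mul ψ₀).deriv
  have hdphi : deriv (phiP ν) a = -Real.sqrt ν * a⁻¹ :=
    ((Real.hasDerivAt_log hane).const_mul (-Real.sqrt ν)).deriv
  have hrne : a ^ (1 - ν / 2) ≠ 0 := (Real.rpow_pos_of_pos ha _).ne'
  have hratio : a * deriv (psiP ψ₀ ν) a / psiP ψ₀ ν a = 1 - ν / 2 := by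
    rw [hdpsi, psiP, Real.rpow_sub_one hane]
    field_simp
  refine ⟨⟨?_, ?_⟩, ?_⟩
  · rw [hdphi, hratio]
    have h1 : (-Real.sqrt ν * a⁻¹) ^ 2 = ν * (a⁻¹) ^ 2 := by
      rw [mul_pow, neg_sq, Real.sq_sqrt hν.le]
    rw [h1]
    field_simp
    ring
  · rw [hratio]; ring
  · have hexp : Real.exp (Real.sqrt ν * phiP ν a) = a ^ (-ν) := by
      rw [phiP, Real.rpow_def_of_pos ha]
      ring_nf
      rw [Real.sq_sqrt hν.le]
      ring_nf
    have hratio2 : a * deriv (psiP ψ₀ ν) a / (2 * psiP ψ₀ ν a) = (1 - ν / 2) / 2 := by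
      rw [hdpsi, psiP, Real.rpow_sub_one hane]
      field_simp
    rw [VP, hratio2, hexp, psiP, mul_pow, ← Real.rpow_natCast (a ^ (1 - ν/2)) 2,
      ← Real.rpow_mul ha.le, ← Real.rpow_natCast a 2]
    have e1 : (1 - ν / 2) * ((2:ℕ):ℝ) = -ν + ((2:ℕ):ℝ) := by push_cast; ring
    have h2 : a ^ ((2:ℕ):ℝ) ≠ 0 := (Real.rpow_pos_of_pos ha _).ne'
    rw [e1, Real.rpow_add ha]
    field_simp
    ring
end
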